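/- Every irreducible finite-dimensional $\mathfrak{q}(n) \otimes A$-module $V$ ($n \geq 2$, $A$ finitely generated) is annihilated by $\mathfrak{q} \otimes J$ for some radical ideal $J \subseteq A$ of finite codimension; that is, $V$ has finite reduced support. -/

import Mathlib

open Matrix

noncomputable section

variable (n : ℕ) (A : Type*) [CommRing A] [Algebra ℂ A]

/-- Square matrices of size `n+1` with entries in the commutative `ℂ`-algebra `A`. -/
abbrev QMat := Matrix (Fin (n + 1)) (Fin (n + 1)) A

/-- The ambient space of pairs `(X, Y)` of matrices over `A`; a pair represents the
element of `𝔮(n) ⊗ A` with even component `X` and odd component `Y` (using the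
identification of `𝔮(n) ⊗ A` with pairs of traceless `(n+1) × (n+1)` matrices over
`A`, where `(X, Y)` corresponds to the class of `[[X, Y], [Y, X]]`). -/
abbrev QPair := QMat n A × QMat n A

/-- `𝔮(n) ⊗ A`, realized as the space of pairs of traceless matrices over `A`. -/
def qA : Submodule ℂ (QPair n A) where
  carrier := {p | p.1.trace = 0 ∧ p.2.trace = 0}
  add_mem' := by
    intro p q hp hq
    exact ⟨by simp [hp.1, hq.1], by simp [hp.2, hq.2]⟩
  zero_mem' := by simp
  smul_mem' := by
    intro c p hp
    exact ⟨by simp [hp.1], by simp [hp.2]⟩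

/-- The Lie superbracket of `𝔮(n) ⊗ A` in the matrix-pair model: on even components it
is the commutator plus the anticommutator of the odd components (projected back to
traceless matrices), and on odd components it is given by the mixed commutators. -/
def qbr (p q : QPair n A) : QPair n A :=
  (p.1 * q.1 - q.1 * p.1 + p.2 * q.2 + q.2 * p.2 -
      (((n : ℂ) + 1)⁻¹ • (p.2 * q.2 + q.2 * p.2).trace) • (1 : QMat n A),
    p.1 * q.2 - q.2 * p.1 + p.2 * q.1 - q.1 * p.2)

lemma qbr_mem (p q : QPair n A) : qbr n A p q ∈ qA n A := by
  have h1 : ((((n : ℂ) + 1)⁻¹ • (p.2 * q.2 + q.2 * p.2).trace) •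
      (1 : QMat n A)).trace = (p.2 * q.2 + q.2 * p.2).trace := by
    rw [Matrix.trace_smul, Matrix.trace_one, smul_eq_mul, smul_mul_assoc]
    rw [show ((Fintype.card (Fin (n + 1)) : A)) = ((n + 1 : ℕ) : A) by simp]
    rw [← nsmul_eq_mul', ← Nat.cast_smul_eq_nsmul ℂ, smul_smul]
    rw [show (((n + 1 : ℕ) : ℂ)) = (n : ℂ) + 1 by push_cast; ring]
    rw [inv_mul_cancel₀ (by
      exact_mod_cast Nat.cast_add_one_ne_zero (R := ℂ) n), one_smul]
  constructor
  · show (p.1 * q.1 - q.1 * p.1 + p.2 * q.2 + q.2 * p.2 -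
      (((n : ℂ) + 1)⁻¹ • (p.2 * q.2 + q.2 * p.2).trace) • (1 : QMat n A)).trace = 0
    rw [Matrix.trace_sub, h1, Matrix.trace_add, Matrix.trace_add, Matrix.trace_sub,
      Matrix.trace_add, Matrix.trace_mul_comm p.1 q.1]
    ring
  · show (p.1 * q.2 - q.2 * p.1 + p.2 * q.1 - q.1 * p.2).trace = 0
    rw [Matrix.trace_sub, Matrix.trace_add, Matrix.trace_sub,
      Matrix.trace_mul_comm p.1 q.2, Matrix.trace_mul_comm p.2 q.1]
    ring

/-- An element of the matrix-pair model is even if its odd component vanishes. -/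
def IsEvenElt (p : QPair n A) : Prop := p.2 = 0

/-- An element of the matrix-pair model is odd if its even component vanishes. -/
def IsOddElt (p : QPair n A) : Prop := p.1 = 0

/-- Membership in `𝔥₀ ⊗ A`: even, with diagonal matrix component. -/
def InH0 (p : QPair n A) : Prop := p.2 = 0 ∧ p.1.IsDiag

/-- Membership in `𝔥₁ ⊗ A`: odd, with diagonal matrix component. -/
def InH1 (p : QPair n A) : Prop := p.1 = 0 ∧ p.2.IsDiag

/-- Membership in `𝔥 ⊗ A`: both components diagonal. -/
def InH (p : QPair n A) : Prop := p.1.IsDiag ∧ p.2.IsDiag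

/-- Membership in `𝔫⁺ ⊗ A`: both components strictly upper triangular. -/
def InNplus (p : QPair n A) : Prop :=
  ∀ i j : Fin (n + 1), j ≤ i → p.1 i j = 0 ∧ p.2 i j = 0

/-- Membership in `𝔮(n) ⊗ I` for an ideal `I ⊆ A`: all entries lie in `I`. -/
def EntriesIn (I : Ideal A) (p : QPair n A) : Prop :=
  ∀ i j : Fin (n + 1), p.1 i j ∈ I ∧ p.2 i j ∈ I

/-- `𝔥₀ ⊗ A` as a subspace of the matrix-pair model of `𝔮(n) ⊗ A`: even diagonal
traceless pairs. -/
def h0A : Submodule ℂ (QPair n A) where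
  carrier := {p | p.2 = 0 ∧ p.1.IsDiag ∧ p.1.trace = 0}
  add_mem' := by
    intro p q hp hq
    exact ⟨by simp [hp.1, hq.1], hp.2.1.add hq.2.1, by simp [hp.2.2, hq.2.2]⟩
  zero_mem' := ⟨rfl, Matrix.isDiag_zero, by simp⟩
  smul_mem' := by
    intro c p hp
    exact ⟨by simp [hp.1], hp.2.1.smul c, by simp [hp.2.2]⟩

lemma h0A_le_qA : h0A n A ≤ qA n A := by
  intro p hp
  exact ⟨hp.2.2, by simp [hp.1]⟩

/-- The raw data of an action of `𝔮(n) ⊗ A` on a `ℤ₂`-graded vector space `M`: an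
action map and the parity involution `P` of `M`. -/
structure QAct (M : Type*) [AddCommGroup M] [Module ℂ M] where
  act : ↥(qA n A) →ₗ[ℂ] M →ₗ[ℂ] M
  P : M →ₗ[ℂ] M

variable {M : Type*} [AddCommGroup M] [Module ℂ M]

/-- The data `ρ` is a representation of the Lie superalgebra `𝔮(n) ⊗ A`: `P` is an
involution, commuting (resp. anticommuting) with the action of even (resp. odd)
elements, and the bracket acts by the supercommutator. -/
def QAct.IsRep (ρ : QAct n A M) : Prop :=
  (ρ.P ∘ₗ ρ.P = LinearMap.id) ∧
  (∀ x : ↥(qA n A), IsEvenElt n A ↑x → ρ.P ∘ₗ ρ.act x = ρ.act x ∘ₗ ρ.P) ∧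
  (∀ x : ↥(qA n A), IsOddElt n A ↑x → ρ.P ∘ₗ ρ.act x = -(ρ.act x ∘ₗ ρ.P)) ∧
  (∀ x y : ↥(qA n A), (IsEvenElt n A ↑x ∨ IsEvenElt n A ↑y) →
    ρ.act ⟨qbr n A ↑x ↑y, qbr_mem n A _ _⟩ = ρ.act x ∘ₗ ρ.act y - ρ.act y ∘ₗ ρ.act x) ∧
  (∀ x y : ↥(qA n A), IsOddElt n A ↑x → IsOddElt n A ↑y →
    ρ.act ⟨qbr n A ↑x ↑y, qbr_mem n A _ _⟩ = ρ.act x ∘ₗ ρ.act y + ρ.act y ∘ₗ ρ.act x)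

/-- A graded submodule: stable under the action and under the parity involution. -/
def QAct.Invt (ρ : QAct n A M) (N : Submodule ℂ M) : Prop :=
  (∀ x : ↥(qA n A), ∀ m ∈ N, ρ.act x m ∈ N) ∧ ∀ m ∈ N, ρ.P m ∈ N

/-- Irreducibility: `M ≠ 0` and the only graded invariant subspaces are `0`, `M`. -/
def QAct.Irred (ρ : QAct n A M) : Prop :=
  Nontrivial M ∧ ∀ N : Submodule ℂ M, QAct.Invt n A ρ N → N = ⊥ ∨ N = ⊤

/-- The `U(𝔮(n) ⊗ A)`-submodule of `M` generated by `v`: the smallest subspace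
containing `v` and stable under the action. -/
def QAct.gen (ρ : QAct n A M) (v : M) : Submodule ℂ M :=
  sInf {N | v ∈ N ∧ ∀ x : ↥(qA n A), ∀ m ∈ N, ρ.act x m ∈ N}

/-- `v` is a highest weight vector of `ρ` with highest weight `ψ : 𝔥₀ ⊗ A → ℂ`:
`v ≠ 0`, `v` generates `M` (i.e. `U(𝔮 ⊗ A)v = M`), `(𝔫⁺ ⊗ A)v = 0` and every element
of `𝔥₀ ⊗ A` acts on `v` by the scalar given by `ψ` (i.e. `U(𝔥₀ ⊗ A)v = ℂv`). -/
def QAct.IsHWVector (ρ : QAct n A M) (ψ : ↥(h0A n A) →ₗ[ℂ] ℂ) (v : M) : Prop :=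
  v ≠ 0 ∧ QAct.gen n A ρ v = ⊤ ∧
  (∀ x : ↥(qA n A), InNplus n A ↑x → ρ.act x v = 0) ∧
  (∀ (p : QPair n A) (hp : p ∈ h0A n A),
    ρ.act ⟨p, h0A_le_qA n A hp⟩ v = ψ ⟨p, hp⟩ • v)

/-- `ψ ∈ 𝓛(𝔥 ⊗ A)`: a functional on `𝔥₀ ⊗ A` vanishing on `𝔥₀ ⊗ I` for some
finite-codimensional ideal `I ⊆ A`. -/
def LFun (ψ : ↥(h0A n A) →ₗ[ℂ] ℂ) : Prop :=
  ∃ I : Ideal A, FiniteDimensional ℂ (A ⧸ I) ∧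
    ∀ x : ↥(h0A n A), EntriesIn n A I ↑x → ψ x = 0

/-!
Let `K = Ann_A(M)`. The map `a ↦ (ρ(E ⊗ a))_E`, over the elementary matrices `E`, has kernel
`K` and values in a finite-dimensional space, so `A/K` and `A/√K` are finite-dimensional, and
`(√K)^d ⊆ K` because `A` is noetherian. It therefore suffices to show: if `𝔮 ⊗ I²` kills `M`,
then so does `𝔮 ⊗ I`.

The common kernel of `𝔮 ⊗ I` is a graded submodule, so by irreducibility it suffices that it is
nonzero. Modulo `𝔮 ⊗ I²` the homogeneous elements of `𝔮 ⊗ I` commute or anticommute, and the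
odd ones square to zero. An even one, `z`, acts nilpotently: since `[z, [z, y]]` acts by zero,
every generalized eigenspace of `ρ z` is a graded submodule, hence all of `M`, and the eigenvalue
is `0` because `ρ z` has trace zero (for `n ≥ 2` every elementary element is a bracket).
Pairwise commuting or anticommuting nilpotent operators on a finite-dimensional space have a
common null vector.
-/

theorem pow_succ_mul_eq_of_commute_lie {R : Type*} [Ring R] {a b : R} (h : Commute a ⁅a, b⁆)
    (k : ℕ) : a ^ (k + 1) * b = b * a ^ (k + 1) + (k + 1) • (⁅a, b⁆ * a ^ k) := by
  have hab : a * b = b * a + ⁅a, b⁆ := by rw [Ring.lie_def]; abel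
  induction k with
  | zero => simp [hab]
  | succ k ih =>
    calc a ^ (k + 1 + 1) * b = a * (a ^ (k + 1) * b) := by rw [← mul_assoc, ← pow_succ']
      _ = (a * b) * a ^ (k + 1) + (k + 1) • ((a * ⁅a, b⁆) * a ^ k) := by
          rw [ih, mul_add, mul_smul_comm, mul_assoc, mul_assoc]
      _ = b * a ^ (k + 1 + 1) + (k + 1 + 1) • (⁅a, b⁆ * a ^ (k + 1)) := by
          rw [hab, h.eq, add_mul, mul_assoc, mul_assoc, ← pow_succ', ← pow_succ', add_assoc,
            ← succ_nsmul']

theorem Matrix.mul_apply_mem_mul {l m o R : Type*} [Fintype m] [CommSemiring R] {I I' : Ideal R}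
    {X : Matrix l m R} {Y : Matrix m o R} (hX : ∀ i j, X i j ∈ I) (hY : ∀ i j, Y i j ∈ I')
    (i : l) (k : o) : (X * Y) i k ∈ I * I' := by
  rw [Matrix.mul_apply]
  exact Submodule.sum_mem _ fun j _ => Ideal.mul_mem_mul (hX i j) (hY j k)

theorem finiteDimensional_quotient_of_ker_le {K R V : Type*} [Field K] [CommRing R] [Algebra K R]
    [AddCommGroup V] [Module K V] [FiniteDimensional K V] (f : R →ₗ[K] V) {J : Ideal R}
    (h : LinearMap.ker f ≤ J.restrictScalars K) : FiniteDimensional K (R ⧸ J) := by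
  have : FiniteDimensional K (R ⧸ LinearMap.ker f) := f.quotKerEquivRange.symm.finiteDimensional
  refine Module.Finite.of_surjective ((LinearMap.ker f).liftQ (Ideal.Quotient.mkₐ K J).toLinearMap
    fun a ha => ?_) ?_
  · simpa [Ideal.Quotient.eq_zero_iff_mem] using h ha
  · rintro ⟨a⟩
    exact ⟨Submodule.Quotient.mk a, rfl⟩

namespace Module.End

section CommRing

variable {R V : Type*} [CommRing R] [AddCommGroup V] [Module R V]

theorem mapsTo_maxGenEigenspace_of_commute_lie {f g : End R V} (h : Commute f ⁅f, g⁆) (μ : R) :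
    Set.MapsTo g (f.maxGenEigenspace μ) (f.maxGenEigenspace μ) := by
  intro m hm
  simp only [SetLike.mem_coe, mem_maxGenEigenspace] at hm ⊢
  obtain ⟨k, hk⟩ := hm
  have hlie : ⁅f - μ • 1, g⁆ = ⁅f, g⁆ := by simp [Ring.lie_def, sub_mul, mul_sub]
  have hcomm : Commute (f - μ • 1) ⁅f - μ • 1, g⁆ :=
    hlie ▸ h.sub_left ((Commute.one_left _).smul_left μ)
  refine ⟨k + 1, ?_⟩
  rw [← mul_apply, pow_succ_mul_eq_of_commute_lie hcomm, LinearMap.add_apply, mul_apply,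
    LinearMap.smul_apply, mul_apply, pow_succ', mul_apply, hk]
  simp

theorem inf_ker_ne_bot_of_isNilpotent {W : Submodule R V} (hW : W ≠ ⊥) {f : End R V}
    (hf : Set.MapsTo f W W) (hnil : IsNilpotent f) : W ⊓ LinearMap.ker f ≠ ⊥ := by
  intro hbot
  obtain ⟨k, hk⟩ := isNilpotent.restrict hf hnil
  have hinj : Function.Injective (f.restrict hf) := by
    rw [← LinearMap.ker_eq_bot, eq_bot_iff]
    intro w hw
    have : (w : V) ∈ W ⊓ LinearMap.ker f := ⟨w.2, congrArg Subtype.val (LinearMap.mem_ker.mp hw)⟩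
    simpa [hbot] using this
  have : Function.Injective (0 : End R W) := by
    rw [← hk, coe_pow]
    exact hinj.iterate k
  apply hW
  rw [eq_bot_iff]
  intro w hw
  simpa using @this ⟨w, hw⟩ 0 rfl

theorem iInf_ker_ne_bot [Nontrivial V] (T : Finset (End R V)) (hnil : ∀ f ∈ T, IsNilpotent f)
    (hcomm : ∀ f ∈ T, ∀ g ∈ T, f * g = g * f ∨ f * g = -(g * f)) :
    ⨅ f ∈ T, LinearMap.ker f ≠ ⊥ := by
  classical
  induction T using Finset.induction_on with
  | empty => simp
  | insert a T _ ih =>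
    simp only [Finset.mem_insert, forall_eq_or_imp] at hnil hcomm
    rw [Finset.iInf_insert, inf_comm]
    refine inf_ker_ne_bot_of_isNilpotent (ih hnil.2 fun f hf g hg => (hcomm.2 f hf).2 g hg)
      ?_ hnil.1
    intro w hw
    simp only [SetLike.mem_coe, Submodule.mem_iInf, LinearMap.mem_ker] at hw ⊢
    intro f hf
    rcases (hcomm.2 f hf).1 with h | h
    · rw [← mul_apply, h, mul_apply, hw f hf, map_zero]
    · rw [← mul_apply, h, LinearMap.neg_apply, mul_apply, hw f hf, map_zero, neg_zero]

end CommRing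

section Field

variable {K V : Type*} [Field K] [AddCommGroup V] [Module K V] [FiniteDimensional K V]
  [Nontrivial V]

theorem exists_ne_zero_forall_apply_eq_zero {S : Set (End K V)} (hnil : ∀ f ∈ S, IsNilpotent f)
    (hcomm : ∀ f ∈ S, ∀ g ∈ S, f * g = g * f ∨ f * g = -(g * f)) :
    ∃ v ≠ 0, ∀ f ∈ S, f v = 0 := by
  obtain ⟨B, hBS, hspan, hind⟩ := exists_linearIndependent K S
  have hB : B.Finite := hind.setFinite
  obtain ⟨v, hv, hv0⟩ := (Submodule.ne_bot_iff _).mp <| iInf_ker_ne_bot hB.toFinset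
    (fun f hf => hnil f (hBS (hB.mem_toFinset.mp hf)))
    (fun f hf g hg => hcomm f (hBS (hB.mem_toFinset.mp hf)) g (hBS (hB.mem_toFinset.mp hg)))
  simp only [Submodule.mem_iInf, LinearMap.mem_ker, Set.Finite.mem_toFinset] at hv
  refine ⟨v, hv0, fun f hf => ?_⟩
  have hle : Submodule.span K S ≤ LinearMap.ker (LinearMap.applyₗ v) := by
    rw [← hspan, Submodule.span_le]
    exact fun g hg => hv g hg
  exact hle (Submodule.subset_span hf)

theorem isNilpotent_of_maxGenEigenspace_eq_top [CharZero K] {f : End K V} {μ : K}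
    (h : f.maxGenEigenspace μ = ⊤) (htr : LinearMap.trace K V f = 0) : IsNilpotent f := by
  obtain ⟨k, hk⟩ : IsNilpotent (f - μ • 1) := by
    refine ⟨f.maxGenEigenspaceIndex μ, LinearMap.ext fun m => ?_⟩
    have hm : m ∈ f.maxGenEigenspace μ := h ▸ Submodule.mem_top
    rwa [maxGenEigenspace_eq, genEigenspace_nat] at hm
  have hμ : μ = 0 := by
    have htr' : LinearMap.trace K V (f - μ • 1) = 0 :=
      (LinearMap.isNilpotent_trace_of_isNilpotent ⟨k, hk⟩).eq_zero
    rw [map_sub, htr, map_smul, LinearMap.trace_one, smul_eq_mul, zero_sub, neg_eq_zero] at htr'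
    exact (mul_eq_zero.mp htr').resolve_right (by simpa using Module.finrank_pos.ne')
  exact ⟨k, by simpa [hμ] using hk⟩

end Field

end Module.End

section Elementary

variable {n A}

def elemMat (i j : Fin (n + 1)) : A →ₗ[ℂ] QMat n A :=
  Matrix.singleLinearMap ℂ i j -
    if i = j then Matrix.singleLinearMap ℂ (Fin.last n) (Fin.last n) else 0

theorem elemMat_apply (i j : Fin (n + 1)) (a : A) :
    elemMat i j a =
      Matrix.single i j a - if i = j then Matrix.single (Fin.last n) (Fin.last n) a else 0 := by
  unfold elemMat
  split_ifs <;> rfl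

theorem elemMat_of_ne {i j : Fin (n + 1)} (h : i ≠ j) (a : A) :
    elemMat i j a = Matrix.single i j a := by
  simp [elemMat_apply, h]

theorem elemMat_last_last (a : A) : elemMat (Fin.last n) (Fin.last n) a = 0 := by
  simp [elemMat_apply]

theorem trace_elemMat (i j : Fin (n + 1)) (a : A) : (elemMat i j a).trace = 0 := by
  rw [elemMat_apply]
  split_ifs with h <;> simp [h, Matrix.trace_single_eq_of_ne]

theorem sum_elemMat {X : QMat n A} (hX : X.trace = 0) : ∑ i, ∑ j, elemMat i j (X i j) = X := by
  simp_rw [elemMat_apply, Finset.sum_sub_distrib]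
  rw [← Matrix.matrix_eq_sum_single]
  simp only [Finset.sum_ite_eq, Finset.mem_univ, if_true]
  have hsum : ∑ i, Matrix.single (Fin.last n) (Fin.last n) (X i i) =
      Matrix.single (Fin.last n) (Fin.last n) X.trace :=
    (map_sum (Matrix.singleAddMonoidHom (α := A) (Fin.last n) (Fin.last n)) _ _).symm
  rw [hsum, hX, Matrix.single_zero, sub_zero]

def elem (odd : Bool) (i j : Fin (n + 1)) : A →ₗ[ℂ] qA n A :=
  LinearMap.codRestrict (qA n A)
    ((if odd then LinearMap.inr ℂ _ _ else LinearMap.inl ℂ _ _) ∘ₗ elemMat i j)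
    (fun a => by cases odd <;> simp [qA, trace_elemMat])

theorem coe_elem (odd : Bool) (i j : Fin (n + 1)) (a : A) :
    (elem odd i j a : QPair n A) = if odd then (0, elemMat i j a) else (elemMat i j a, 0) := by
  cases odd <;> rfl

theorem isEvenElt_elem (i j : Fin (n + 1)) (a : A) : IsEvenElt n A (elem false i j a) := rfl

theorem sum_elem (x : qA n A) :
    ∑ i, ∑ j, (elem false i j (x.1.1 i j) + elem true i j (x.1.2 i j)) = x := by
  apply Subtype.ext
  simp only [Submodule.coe_sum, Submodule.coe_add, coe_elem]
  ext : 1 <;> simp [Prod.fst_sum, Prod.snd_sum, sum_elemMat x.2.1, sum_elemMat x.2.2]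

def qA.bracket (x y : qA n A) : qA n A := ⟨qbr n A x y, qbr_mem n A x y⟩

theorem bracket_elem_of_ne {i k j : Fin (n + 1)} (hik : i ≠ k) (hkj : k ≠ j) (hij : i ≠ j)
    (odd : Bool) (b a : A) :
    qA.bracket (elem false i k b) (elem odd k j a) = elem odd i j (b * a) := by
  apply Subtype.ext
  cases odd <;> simp [qA.bracket, qbr, coe_elem, elemMat_of_ne, hik, hkj, hij, Ne.symm hij,
    Matrix.single_mul_single_of_ne]

theorem bracket_elem_diag (i : Fin (n + 1)) (odd : Bool) (b a : A) :
    qA.bracket (elem false i (Fin.last n) b) (elem odd (Fin.last n) i a) =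
      elem odd i i (b * a) := by
  apply Subtype.ext
  rcases eq_or_ne i (Fin.last n) with rfl | hi
  · cases odd <;> simp [qA.bracket, qbr, coe_elem, elemMat_last_last]
  · cases odd <;> simp [qA.bracket, qbr, coe_elem, elemMat_of_ne, elemMat_apply, hi, Ne.symm hi,
      mul_comm a b]

theorem exists_bracket_elem_eq (hn : 2 ≤ n) (odd : Bool) (i j : Fin (n + 1)) (b a : A) :
    ∃ k l, qA.bracket (elem false i k b) (elem odd k l a) = elem odd i j (b * a) := by
  rcases eq_or_ne i j with rfl | hij
  · exact ⟨_, _, bracket_elem_diag i odd b a⟩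
  · obtain ⟨k, hki, hkj⟩ := Fin.exists_ne_and_ne_of_two_lt i j (by omega)
    exact ⟨k, j, bracket_elem_of_ne hki.symm hkj hij odd b a⟩

def evenPart (x : qA n A) : qA n A := ⟨(x.1.1, 0), x.2.1, Matrix.trace_zero _ _⟩

def oddPart (x : qA n A) : qA n A := ⟨(0, x.1.2), Matrix.trace_zero _ _, x.2.2⟩

theorem evenPart_add_oddPart (x : qA n A) : evenPart x + oddPart x = x := by
  apply Subtype.ext
  ext : 1 <;> simp [evenPart, oddPart]

theorem isEvenElt_evenPart (x : qA n A) : IsEvenElt n A (evenPart x) := rfl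

theorem isOddElt_oddPart (x : qA n A) : IsOddElt n A (oddPart x) := rfl

theorem entriesIn_evenPart {I : Ideal A} {x : qA n A} (hx : EntriesIn n A I x) :
    EntriesIn n A I (evenPart x) :=
  fun i j => ⟨(hx i j).1, I.zero_mem⟩

theorem entriesIn_oddPart {I : Ideal A} {x : qA n A} (hx : EntriesIn n A I x) :
    EntriesIn n A I (oddPart x) :=
  fun i j => ⟨I.zero_mem, (hx i j).2⟩

theorem entriesIn_qbr {I I' : Ideal A} {p q : QPair n A} (hp : EntriesIn n A I p)
    (hq : EntriesIn n A I' q) : EntriesIn n A (I * I') (qbr n A p q) := by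
  have hmul : ∀ {X Y : QMat n A}, (∀ i j, X i j ∈ I) → (∀ i j, Y i j ∈ I') →
      ∀ i j, (X * Y) i j ∈ I * I' ∧ (Y * X) i j ∈ I * I' := fun hX hY i j =>
    ⟨Matrix.mul_apply_mem_mul hX hY i j, mul_comm I I' ▸ Matrix.mul_apply_mem_mul hY hX i j⟩
  have h11 := hmul (fun i j => (hp i j).1) (fun i j => (hq i j).1)
  have h12 := hmul (fun i j => (hp i j).1) (fun i j => (hq i j).2)
  have h21 := hmul (fun i j => (hp i j).2) (fun i j => (hq i j).1)
  have h22 := hmul (fun i j => (hp i j).2) (fun i j => (hq i j).2)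
  have htr : (p.2 * q.2 + q.2 * p.2).trace ∈ I * I' :=
    Submodule.sum_mem _ fun l _ => add_mem (h22 l l).1 (h22 l l).2
  intro i j
  refine ⟨?_, ?_⟩
  · simp only [qbr, Matrix.sub_apply, Matrix.add_apply, Matrix.smul_apply, Matrix.one_apply]
    refine sub_mem (add_mem (add_mem (sub_mem (h11 i j).1 (h11 i j).2) (h22 i j).1) (h22 i j).2) ?_
    split_ifs
    · simpa [Algebra.smul_def] using Ideal.mul_mem_left _ _ htr
    · simp
  · simp only [qbr, Matrix.sub_apply, Matrix.add_apply]
    exact sub_mem (add_mem (sub_mem (h12 i j).1 (h12 i j).2) (h21 i j).1) (h21 i j).2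

theorem entriesIn_qbr_left {I : Ideal A} {p : QPair n A} (hp : EntriesIn n A I p) (q : QPair n A) :
    EntriesIn n A I (qbr n A p q) :=
  I.mul_top ▸ entriesIn_qbr hp fun _ _ => ⟨trivial, trivial⟩

end Elementary

namespace QAct

variable {n A} {ρ : QAct n A M} {I : Ideal A}

def Annihilates (ρ : QAct n A M) (I : Ideal A) : Prop :=
  ∀ x : qA n A, EntriesIn n A I x → ρ.act x = 0

theorem Annihilates.mono {I' : Ideal A} (h : ρ.Annihilates I') (hII' : I ≤ I') :
    ρ.Annihilates I :=
  fun x hx => h x fun i j => ⟨hII' (hx i j).1, hII' (hx i j).2⟩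

def commonKer (ρ : QAct n A M) (I : Ideal A) : Submodule ℂ M :=
  ⨅ (x : qA n A) (_ : EntriesIn n A I x), LinearMap.ker (ρ.act x)

theorem mem_commonKer {m : M} :
    m ∈ ρ.commonKer I ↔ ∀ x : qA n A, EntriesIn n A I x → ρ.act x m = 0 := by
  simp [commonKer]

theorem commonKer_eq_top_iff : ρ.commonKer I = ⊤ ↔ ρ.Annihilates I := by
  simp only [Submodule.eq_top_iff', mem_commonKer, Annihilates, LinearMap.ext_iff,
    LinearMap.zero_apply]
  exact forall_comm.trans (forall_congr' fun _ => forall_comm)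

theorem act_eq_act_evenPart_add_act_oddPart (ρ : QAct n A M) (x : qA n A) :
    ρ.act x = ρ.act (evenPart x) + ρ.act (oddPart x) := by
  rw [← map_add, evenPart_add_oddPart]

theorem IsRep.act_bracket_of_even (hrep : QAct.IsRep n A ρ) {x y : qA n A}
    (h : IsEvenElt n A x ∨ IsEvenElt n A y) : ρ.act (qA.bracket x y) = ⁅ρ.act x, ρ.act y⁆ := by
  rw [Ring.lie_def]; exact hrep.2.2.2.1 x y h

theorem IsRep.act_bracket_of_odd (hrep : QAct.IsRep n A ρ) {x y : qA n A}
    (hx : IsOddElt n A x) (hy : IsOddElt n A y) :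
    ρ.act (qA.bracket x y) = ρ.act x * ρ.act y + ρ.act y * ρ.act x :=
  hrep.2.2.2.2 x y hx hy

theorem IsRep.act_mul_act (hrep : QAct.IsRep n A ρ) {x y : qA n A}
    (hx : IsEvenElt n A x ∨ IsOddElt n A x) (hy : IsEvenElt n A y ∨ IsOddElt n A y) :
    ρ.act x * ρ.act y = ρ.act (qA.bracket x y) + ρ.act y * ρ.act x ∨
      ρ.act x * ρ.act y = ρ.act (qA.bracket x y) - ρ.act y * ρ.act x := by
  by_cases h : IsEvenElt n A x ∨ IsEvenElt n A y
  · left; rw [hrep.act_bracket_of_even h, Ring.lie_def]; abel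
  · right
    rw [not_or] at h
    rw [hrep.act_bracket_of_odd (hx.resolve_left h.1) (hy.resolve_left h.2)]; abel

def elemAct (ρ : QAct n A M) : A →ₗ[ℂ] (Bool × Fin (n + 1) × Fin (n + 1) → Module.End ℂ M) :=
  LinearMap.pi fun t => ρ.act ∘ₗ elem t.1 t.2.1 t.2.2

/-- The paper's `Ann_A(M)`, the largest ideal `I` of `A` with `(𝔮 ⊗ I) M = 0`. -/
def annIdeal (ρ : QAct n A M) (hn : 2 ≤ n) (hrep : QAct.IsRep n A ρ) : Ideal A where
  __ := (LinearMap.ker ρ.elemAct).toAddSubmonoid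
  smul_mem' b a ha := by
    funext ⟨odd, i, j⟩
    obtain ⟨k, l, h⟩ := exists_bracket_elem_eq hn odd i j b a
    have ha' : ρ.act (elem odd k l a) = 0 := congrFun (LinearMap.mem_ker.mp ha) (odd, k, l)
    simp [elemAct, ← h, hrep.act_bracket_of_even (.inl (isEvenElt_elem _ _ _)), ha', Ring.lie_def]

theorem annihilates_of_le_annIdeal {hn : 2 ≤ n} {hrep : QAct.IsRep n A ρ}
    (h : I ≤ ρ.annIdeal hn hrep) : ρ.Annihilates I := by
  intro x hx
  have helem : ∀ odd i j, ∀ a ∈ I, ρ.act (elem odd i j a) = 0 :=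
    fun odd i j a ha => congrFun (LinearMap.mem_ker.mp (h ha)) (odd, i, j)
  rw [← sum_elem x]
  simp [helem _ _ _ _ (hx _ _).1, helem _ _ _ _ (hx _ _).2]

theorem finiteDimensional_quotient_of_annIdeal_le [FiniteDimensional ℂ M] (hn : 2 ≤ n)
    (hrep : QAct.IsRep n A ρ) {J : Ideal A} (h : ρ.annIdeal hn hrep ≤ J) :
    FiniteDimensional ℂ (A ⧸ J) :=
  finiteDimensional_quotient_of_ker_le ρ.elemAct fun _ ha => h ha

theorem IsRep.trace_act_of_isEvenElt (hrep : QAct.IsRep n A ρ) (hn : 2 ≤ n) {z : qA n A}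
    (hz : IsEvenElt n A z) : LinearMap.trace ℂ M (ρ.act z) = 0 := by
  have helem : ∀ i j a, LinearMap.trace ℂ M (ρ.act (elem false i j a)) = 0 := by
    intro i j a
    obtain ⟨k, l, h⟩ := exists_bracket_elem_eq hn false i j 1 a
    rw [← one_mul a, ← h, hrep.act_bracket_of_even (.inl (isEvenElt_elem _ _ _)),
      LinearMap.trace_lie]
  have hz' : (z : QPair n A).2 = 0 := hz
  rw [← sum_elem z]
  simp [hz', helem]

theorem IsRep.act_apply_act_eq_zero (hrep : QAct.IsRep n A ρ) {x y : qA n A}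
    (hx : IsEvenElt n A x ∨ IsOddElt n A x) (hy : IsEvenElt n A y ∨ IsOddElt n A y)
    (hxI : EntriesIn n A I x) {m : M} (hm : m ∈ ρ.commonKer I) : ρ.act x (ρ.act y m) = 0 := by
  have h1 := mem_commonKer.1 hm (qA.bracket x y) (entriesIn_qbr_left hxI _)
  have h2 := mem_commonKer.1 hm x hxI
  rcases hrep.act_mul_act hx hy with h | h <;>
    rw [← Module.End.mul_apply, h] <;> simp [h1, h2]

theorem IsRep.commonKer_invt (hrep : QAct.IsRep n A ρ) : QAct.Invt n A ρ (ρ.commonKer I) := by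
  refine ⟨fun y m hm => mem_commonKer.2 fun x hx => ?_, fun m hm => mem_commonKer.2 fun x hx => ?_⟩
  · have hx0 := isEvenElt_evenPart x
    have hx1 := isOddElt_oddPart x
    have hy0 := isEvenElt_evenPart y
    have hy1 := isOddElt_oddPart y
    rw [act_eq_act_evenPart_add_act_oddPart ρ x, act_eq_act_evenPart_add_act_oddPart ρ y]
    simp only [LinearMap.add_apply, map_add]
    rw [hrep.act_apply_act_eq_zero (.inl hx0) (.inl hy0) (entriesIn_evenPart hx) hm,
      hrep.act_apply_act_eq_zero (.inl hx0) (.inr hy1) (entriesIn_evenPart hx) hm,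
      hrep.act_apply_act_eq_zero (.inr hx1) (.inl hy0) (entriesIn_oddPart hx) hm,
      hrep.act_apply_act_eq_zero (.inr hx1) (.inr hy1) (entriesIn_oddPart hx) hm,
      add_zero, add_zero]
  · have heven := LinearMap.congr_fun (hrep.2.1 _ (isEvenElt_evenPart x)) m
    have hodd := LinearMap.congr_fun (hrep.2.2.1 _ (isOddElt_oddPart x)) m
    simp only [LinearMap.comp_apply, LinearMap.neg_apply,
      mem_commonKer.1 hm _ (entriesIn_evenPart hx), mem_commonKer.1 hm _ (entriesIn_oddPart hx),
      map_zero] at heven hodd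
    rw [act_eq_act_evenPart_add_act_oddPart ρ x, LinearMap.add_apply, ← heven,
      neg_eq_zero.mp hodd.symm, add_zero]

theorem IsRep.isNilpotent_act_of_isEvenElt (hrep : QAct.IsRep n A ρ) (hirr : QAct.Irred n A ρ)
    (hn : 2 ≤ n) [FiniteDimensional ℂ M] (hsq : ρ.Annihilates (I * I)) {z : qA n A}
    (hz : IsEvenElt n A z) (hzI : EntriesIn n A I z) : IsNilpotent (ρ.act z) := by
  have := hirr.1
  obtain ⟨μ, hμ⟩ := Module.End.exists_eigenvalue (ρ.act z)
  have hcomm : ∀ y, Commute (ρ.act z) ⁅ρ.act z, ρ.act y⁆ := fun y => by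
    rw [commute_iff_lie_eq, ← hrep.act_bracket_of_even (.inl hz),
      ← hrep.act_bracket_of_even (.inl hz)]
    exact hsq _ (entriesIn_qbr hzI (entriesIn_qbr_left hzI _))
  have hinvt : QAct.Invt n A ρ (Module.End.maxGenEigenspace (ρ.act z) μ) :=
    ⟨fun y _ hm => Module.End.mapsTo_maxGenEigenspace_of_commute_lie (hcomm y) μ hm,
      fun _ hm => Module.End.mapsTo_maxGenEigenspace_of_comm (hrep.2.1 z hz).symm μ hm⟩
  have hne : Module.End.maxGenEigenspace (ρ.act z) μ ≠ ⊥ :=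
    ne_bot_of_le_ne_bot (Module.End.hasEigenvalue_iff.1 hμ)
      Module.End.eigenspace_le_maxGenEigenspace
  exact Module.End.isNilpotent_of_maxGenEigenspace_eq_top ((hirr.2 _ hinvt).resolve_left hne)
    (hrep.trace_act_of_isEvenElt hn hz)

theorem IsRep.act_mul_self_of_isOddElt (hrep : QAct.IsRep n A ρ) (hsq : ρ.Annihilates (I * I))
    {x : qA n A} (hx : IsOddElt n A x) (hxI : EntriesIn n A I x) : ρ.act x * ρ.act x = 0 := by
  have h := hrep.act_bracket_of_odd hx hx
  rw [hsq _ (entriesIn_qbr hxI hxI), ← two_smul ℂ] at h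
  exact (smul_eq_zero.1 h.symm).resolve_left two_ne_zero

theorem IsRep.commonKer_ne_bot (hrep : QAct.IsRep n A ρ) (hirr : QAct.Irred n A ρ) (hn : 2 ≤ n)
    [FiniteDimensional ℂ M] (hsq : ρ.Annihilates (I * I)) : ρ.commonKer I ≠ ⊥ := by
  have := hirr.1
  let S : Set (Module.End ℂ M) := {f | ∃ x : qA n A, (IsEvenElt n A x ∨ IsOddElt n A x) ∧
    EntriesIn n A I x ∧ ρ.act x = f}
  have hnil : ∀ f ∈ S, IsNilpotent f := by
    rintro _ ⟨x, hx | hx, hxI, rfl⟩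
    · exact hrep.isNilpotent_act_of_isEvenElt hirr hn hsq hx hxI
    · exact ⟨2, by rw [sq]; exact hrep.act_mul_self_of_isOddElt hsq hx hxI⟩
  have hcomm : ∀ f ∈ S, ∀ g ∈ S, f * g = g * f ∨ f * g = -(g * f) := by
    rintro _ ⟨x, hx, hxI, rfl⟩ _ ⟨y, hy, hyI, rfl⟩
    simpa [hsq (qA.bracket x y) (entriesIn_qbr hxI hyI)] using hrep.act_mul_act hx hy
  obtain ⟨v, hv0, hv⟩ := Module.End.exists_ne_zero_forall_apply_eq_zero hnil hcomm
  refine (Submodule.ne_bot_iff _).2 ⟨v, mem_commonKer.2 fun x hx => ?_, hv0⟩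
  rw [act_eq_act_evenPart_add_act_oddPart ρ x, LinearMap.add_apply,
    hv _ ⟨_, .inl (isEvenElt_evenPart x), entriesIn_evenPart hx, rfl⟩,
    hv _ ⟨_, .inr (isOddElt_oddPart x), entriesIn_oddPart hx, rfl⟩, add_zero]

theorem Irred.annihilates_of_annihilates_mul_self (hirr : QAct.Irred n A ρ)
    (hrep : QAct.IsRep n A ρ) (hn : 2 ≤ n) [FiniteDimensional ℂ M]
    (hsq : ρ.Annihilates (I * I)) : ρ.Annihilates I :=
  commonKer_eq_top_iff.1 <|
    (hirr.2 _ hrep.commonKer_invt).resolve_left (hrep.commonKer_ne_bot hirr hn hsq)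

theorem Irred.annihilates_of_annihilates_pow (hirr : QAct.Irred n A ρ)
    (hrep : QAct.IsRep n A ρ) (hn : 2 ≤ n) [FiniteDimensional ℂ M] (d : ℕ)
    (h : ρ.Annihilates (I ^ (d + 1))) : ρ.Annihilates I := by
  induction d with
  | zero => simpa using h
  | succ d ih =>
    refine ih (hirr.annihilates_of_annihilates_mul_self hrep hn (h.mono ?_))
    rw [← pow_add]
    exact Ideal.pow_le_pow_right (by omega)

end QAct

/-- Every irreducible finite-dimensional `𝔮(n) ⊗ A`-module (`A` finitely generated) is
annihilated by `𝔮 ⊗ J` for some radical ideal `J ⊆ A` of finite codimension; that is,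
it has finite reduced support. -/
theorem irred_fd_has_finite_reduced_support (hn : 2 ≤ n)
    [Algebra.FiniteType ℂ A] [FiniteDimensional ℂ M]
    (ρ : QAct n A M) (hrep : QAct.IsRep n A ρ) (hirr : QAct.Irred n A ρ) :
    ∃ J : Ideal A, J.IsRadical ∧ FiniteDimensional ℂ (A ⧸ J) ∧
      ∀ x : ↥(qA n A), EntriesIn n A J ↑x → ρ.act x = 0 := by
  have := Algebra.FiniteType.isNoetherianRing ℂ A
  let K := ρ.annIdeal hn hrep
  obtain ⟨d, hd⟩ := K.exists_radical_pow_le_of_fg (IsNoetherian.noetherian _)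
  refine ⟨K.radical, K.radical_isRadical,
    QAct.finiteDimensional_quotient_of_annIdeal_le hn hrep K.le_radical, ?_⟩
  exact hirr.annihilates_of_annihilates_pow hrep hn d
    (QAct.annihilates_of_le_annIdeal ((Ideal.pow_le_pow_right d.le_succ).trans hd))
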